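/- Let (X,T) be an invertible topological dynamical system with Borel σ-algebra B, μ a T-ergodic Borel probability measure, and F a sub-σ-algebra of B with T^{-1}F ⊆ F, so that the σ-algebras F_n = T^{-n}F (n ≥ 0) form a decreasing sequence; let G = ⋂_{n≥0} F_n, ν_n = μ⊠_{F_n} μ and λ = μ⊠_G μ. Then: (i) ν_n(A×B) → λ(A×B) for all Borel sets A, B, and ν_n → λ weakly; (ii) for every closed subset F' of X×X with (T×T)F' ⊇ F' one has λ(F') ≥ ν_0(F'); (iii) for every open subset U of X×X with (T×T)U ⊆ U one has λ(U) ≤ ν_0(U). -/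

import Mathlib

open MeasureTheory Filter Topology Set
open scoped symmDiff Classical ENNReal NNReal

section Defs

variable {X : Type*}

/-- The pair `(x, y)` is (positively) asymptotic for `T`. -/
def IsAsymptoticPair [PseudoMetricSpace X] (T : X → X) (x y : X) : Prop :=
  Tendsto (fun n : ℕ => dist (T^[n] x) (T^[n] y)) atTop (𝓝 0)

/-- Shannon entropy of the finite measurable partition of `X` given by the fibers of a
map `p` into a finite type. -/
noncomputable def partEntropy [MeasurableSpace X] (μ : Measure X) {ι : Type*} [Fintype ι]
    (p : X → ι) : ℝ :=
  ∑ i : ι, Real.negMulLog (μ (p ⁻¹' {i})).toReal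

/-- Conditional Shannon entropy `H(P | F)` of the finite partition given by the fibers
of `p` with respect to the sub-σ-algebra `F`:
`H(P|F) = ∑_{A ∈ P} ∫ -E(1_A|F) log E(1_A|F) dμ`. -/
noncomputable def condPartEntropy [MeasurableSpace X] (μ : Measure X)
    (F : MeasurableSpace X) {ι : Type*} [Fintype ι] (p : X → ι) : ℝ :=
  ∑ i : ι, ∫ x, Real.negMulLog ((μ[(p ⁻¹' {i}).indicator (fun _ => (1 : ℝ)) | F]) x) ∂μ

/-- The σ-algebra `σ(P^-)` generated by the partitions `T^{-n}P`, `n ≥ 1`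
(the "past" of the partition given by the fibers of `p`). -/
def partPast (T : X → X) {ι : Type*} (p : X → ι) : MeasurableSpace X :=
  ⨆ n : ℕ, MeasurableSpace.comap (fun x => p (T^[n + 1] x)) ⊤

/-- The σ-algebra `σ(P^T)` generated by the partitions `T^{-n}P`, `n ∈ ℤ`, where `S = T⁻¹`. -/
def partHull (T S : X → X) {ι : Type*} (p : X → ι) : MeasurableSpace X :=
  ⨆ n : ℕ,
    MeasurableSpace.comap (fun x => p (T^[n] x)) ⊤ ⊔
      MeasurableSpace.comap (fun x => p (S^[n] x)) ⊤

/-- Kolmogorov–Sinai entropy of a finite partition: `h_μ(P, T) = H(P | P^-)`. -/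
noncomputable def partKS [MeasurableSpace X] (μ : Measure X) (T : X → X) {ι : Type*}
    [Fintype ι] (p : X → ι) : ℝ :=
  condPartEntropy μ (partPast T p) p

/-- Kolmogorov–Sinai (measure-theoretic) entropy `h_μ(X, T)` of the system:
the supremum over all finite measurable partitions `P` of `h_μ(P, T)`. -/
noncomputable def ksEntropy [MeasurableSpace X] (μ : Measure X) (T : X → X) : ℝ≥0∞ :=
  ⨆ (k : ℕ) (p : X → Fin k) (_ : Measurable p), ENNReal.ofReal (partKS μ T p)

/-- The Pinsker σ-algebra `Π_μ`: the σ-algebra generated by all finite measurable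
partitions with zero Kolmogorov–Sinai entropy. -/
def pinskerAlg [MeasurableSpace X] (μ : Measure X) (T : X → X) : MeasurableSpace X :=
  ⨆ (k : ℕ) (p : X → Fin k) (_ : Measurable p) (_ : partKS μ T p = 0),
    MeasurableSpace.comap p ⊤

/-- Minimal cardinality of a subcover of `⋁_{i=0}^{n-1} T^{-i} C`, where `C` is a
finite cover of `X`. -/
noncomputable def coverNum (T : X → X) {k : ℕ} (C : Fin k → Set X) (n : ℕ) : ℕ :=
  sInf {m : ℕ | ∃ f : Fin m → Fin n → Fin k,
    (⋃ j : Fin m, ⋂ i : Fin n, T^[(i : ℕ)] ⁻¹' C (f j i)) = Set.univ}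

/-- Topological entropy of a finite cover `C`:
`h(C, T) = inf_n (1/n) log N(⋁_{i=0}^{n-1} T^{-i} C) = lim_n (1/n) log N(...)`. -/
noncomputable def coverEntropyOf (T : X → X) {k : ℕ} (C : Fin k → Set X) : ℝ :=
  ⨅ n : ℕ, Real.log (coverNum T C (n + 1)) / (n + 1)

/-- `(x, y)` is a topological entropy pair: `x ≠ y` and every two-set open cover
`{Uᶜ, Vᶜ}`, where `U` and `V` are disjoint closed neighbourhoods of `x` and `y`,
has positive topological entropy. -/
def IsEntropyPair [TopologicalSpace X] (T : X → X) (x y : X) : Prop :=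
  x ≠ y ∧ ∀ U V : Set X, IsClosed U → IsClosed V → U ∈ 𝓝 x → V ∈ 𝓝 y → Disjoint U V →
    0 < coverEntropyOf T ![Uᶜ, Vᶜ]

/-- `(x, y)` is an entropy pair for the invariant measure `μ`: `x ≠ y` and every two-set
Borel partition `(A, Aᶜ)` with `x ∈ interior A` and `y ∈ interior Aᶜ` has positive
entropy with respect to `T` and `μ`. -/
def IsMuEntropyPair [TopologicalSpace X] [MeasurableSpace X] (T : X → X) (μ : Measure X)
    (x y : X) : Prop :=
  x ≠ y ∧ ∀ A : Set X, MeasurableSet A → x ∈ interior A → y ∈ interior Aᶜ →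
    0 < partKS μ T (fun z => if z ∈ A then (0 : Fin 2) else 1)

/-- `ν` is the relatively independent square `μ ⊠_G μ` of `μ` over the sub-σ-algebra `G`:
it is determined by `ν(A × B) = ∫ E(1_A|G) · E(1_B|G) dμ` for all Borel sets `A`, `B`. -/
def IsCondSquare (G : MeasurableSpace X) [m0 : MeasurableSpace X] (μ : Measure X)
    (ν : Measure (X × X)) : Prop :=
  ∀ A B : Set X, MeasurableSet[m0] A → MeasurableSet[m0] B →
    ν (A ×ˢ B) = ENNReal.ofReal
      (∫ x, (μ[A.indicator (fun _ => (1 : ℝ)) | G]) x *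
            (μ[B.indicator (fun _ => (1 : ℝ)) | G]) x ∂μ)

/-- The σ-algebra `m₁` is contained in `m₂` modulo `μ`-null sets. -/
def SubModNull [MeasurableSpace X] (μ : Measure X) (m₁ m₂ : MeasurableSpace X) : Prop :=
  ∀ A : Set X, MeasurableSet[m₁] A → ∃ B : Set X, MeasurableSet[m₂] B ∧ μ (A ∆ B) = 0

end Defs

section Defs2

variable {X : Type*}

/-- The σ-algebra `F^- = ⋁_{n ≥ 1} T^{-n} F`. -/
def pastAlg (T : X → X) (F : MeasurableSpace X) : MeasurableSpace X :=
  ⨆ n : ℕ, MeasurableSpace.comap (T^[n + 1]) F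

/-- The σ-algebra `F^T = ⋁_{n ∈ ℤ} T^{-n} F`, where `S = T⁻¹`. -/
def hullAlg (T S : X → X) (F : MeasurableSpace X) : MeasurableSpace X :=
  ⨆ n : ℕ, MeasurableSpace.comap (T^[n]) F ⊔ MeasurableSpace.comap (S^[n]) F

/-- `P` is (the σ-algebra of) an *excellent* measurable partition for `(X, μ, T)` (here
`S = T⁻¹`): it is generating (`σ(P^T) = 𝒜` mod `μ`) and it is generated by an increasing
sequence of finite measurable partitions `Pₙ ↑ P` with `H(Pₙ|Pₙ⁻) − H(Pₙ|P⁻) → 0`. -/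
def IsExcellentPartition (P : MeasurableSpace X) [m0 : MeasurableSpace X] (μ : Measure X)
    (T S : X → X) : Prop :=
  P ≤ m0 ∧ SubModNull μ m0 (hullAlg T S P) ∧
  ∃ (m : ℕ → ℕ) (Q : ∀ n : ℕ, X → Fin (m n)),
    (∀ n, Measurable (Q n)) ∧
    Monotone (fun n => MeasurableSpace.comap (Q n) (⊤ : MeasurableSpace (Fin (m n)))) ∧
    (⨆ n : ℕ, MeasurableSpace.comap (Q n) (⊤ : MeasurableSpace (Fin (m n)))) = P ∧
    Tendsto (fun n => condPartEntropy μ (partPast T (Q n)) (Q n) -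
      condPartEntropy μ (pastAlg T P) (Q n)) atTop (𝓝 0)

end Defs2

/-!
The σ-algebras `F_n = T^{-n} F` decrease to `G`, so the closed subspaces `L²(F_n)` of `L²(μ)`
decrease to `L²(G)`; the conditional expectations `E(·|F_n)`, being the orthogonal projections
onto them, converge strongly to `E(·|G)`. Hence
`ν_n(A × B) = ⟪E(1_A|F_n), E(1_B|F_n)⟫ → ⟪E(1_A|G), E(1_B|G)⟫ = λ(A × B)`, and since measurable
rectangles form a π-system containing arbitrarily small neighbourhoods of every point, `ν_n → λ`
weakly.

Invariance of `μ` transports `E(·|F)` to `E(·|F_n)` along `T^n`, which gives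
`ν_0 = (T^n × T^n)_* ν_n`. Thus `ν_n(F') ≥ ν_0(F')` for a closed `F' ⊆ (T × T) F'` and
`ν_n(U) ≤ ν_0(U)` for an open `U ⊇ (T × T) U`, and the portmanteau theorem passes these bounds
to the limit `λ`.
-/

open scoped InnerProductSpace

namespace Submodule

variable {𝕜 E : Type*} [RCLike 𝕜] [NormedAddCommGroup E] [InnerProductSpace 𝕜 E]
  [CompleteSpace E]

theorem starProjection_tendsto_iInf {ι : Type*} [Preorder ι] {U : ι → Submodule 𝕜 E}
    [∀ i, (U i).HasOrthogonalProjection] {K : Submodule 𝕜 E} [K.HasOrthogonalProjection]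
    (hU : Antitone U) (hK : ⨅ i, U i = K) (x : E) :
    Tendsto (fun i => (U i).starProjection x) atTop (𝓝 (K.starProjection x)) := by
  have hlim := starProjection_tendsto_closure_iSup (fun i => (U i)ᗮ)
    (fun i j hij => orthogonal_le (hU hij)) x
  have hsplit (L : Submodule 𝕜 E) [L.HasOrthogonalProjection] :
      L.starProjection x = x - Lᗮ.starProjection x :=
    eq_sub_of_add_eq (L.starProjection_add_starProjection_orthogonal x)
  have hclosure : (⨆ i, (U i)ᗮ).topologicalClosure.starProjection x = Kᗮ.starProjection x := by
    congr
    rw [← orthogonal_orthogonal_eq_closure, ← iInf_orthogonal]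
    simp only [orthogonal_orthogonal, hK]
  rw [hsplit K, ← hclosure]
  exact (tendsto_const_nhds.sub hlim).congr fun i => (hsplit (U i)).symm

end Submodule

namespace MeasureTheory

variable {α E : Type*} {m m' m0 : MeasurableSpace α} {μ : Measure α}

theorem AEStronglyMeasurable.iInf_of_antitone [TopologicalSpace E]
    [PolishSpace E] [Nonempty E] {Fs : ℕ → MeasurableSpace α} (hFs : Antitone Fs) {h : α → E}
    (hh : ∀ n, AEStronglyMeasurable[Fs n] h μ) : AEStronglyMeasurable[⨅ n, Fs n] h μ := by
  borelize E
  choose g hg_meas hg_eq using hh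
  set G : α → E := fun x => limUnder atTop (g · x)
  have hG_tail (k : ℕ) : G = fun x => limUnder atTop (fun n => g (n + k) x) := by
    funext x
    simp only [G, limUnder]
    conv_lhs => rw [← map_add_atTop_eq_nat k, map_map]
    rfl
  have hG_meas (k : ℕ) : Measurable[Fs k] G := by
    let := Fs k
    rw [hG_tail k]
    exact (StronglyMeasurable.limUnder fun n =>
      (hg_meas (n + k)).mono (hFs (Nat.le_add_left k n))).measurable
  refine ⟨G, Measurable.stronglyMeasurable fun s hs =>
    MeasurableSpace.measurableSet_iInf.2 fun k => hG_meas k hs, ?_⟩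
  filter_upwards [ae_all_iff.2 hg_eq] with x hx
  simp only [G, ← hx]
  exact tendsto_const_nhds.limUnder_eq.symm

variable {𝕜 : Type*} [RCLike 𝕜] {Fs : ℕ → MeasurableSpace α}

theorem lpMeas_mono [NormedAddCommGroup E] [NormedSpace 𝕜 E]
    (hm : m ≤ m') (p : ℝ≥0∞) : lpMeas E 𝕜 m p μ ≤ lpMeas E 𝕜 m' p μ := fun f hf => by
  rw [mem_lpMeas_iff_aestronglyMeasurable] at hf ⊢
  exact hf.mono hm

theorem iInf_lpMeas_of_antitone [NormedAddCommGroup E] [NormedSpace 𝕜 E] [CompleteSpace E]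
    [SecondCountableTopology E] (hFs : Antitone Fs) (p : ℝ≥0∞) :
    ⨅ n, lpMeas E 𝕜 (Fs n) p μ = lpMeas E 𝕜 (⨅ n, Fs n) p μ := by
  refine le_antisymm (fun f hf => ?_) (le_iInf fun n => lpMeas_mono (iInf_le Fs n) p)
  simp only [Submodule.mem_iInf, mem_lpMeas_iff_aestronglyMeasurable] at hf ⊢
  exact AEStronglyMeasurable.iInf_of_antitone hFs hf

theorem tendsto_condExpL2_iInf [NormedAddCommGroup E] [InnerProductSpace 𝕜 E] [CompleteSpace E]
    [SecondCountableTopology E] (hle : ∀ n, Fs n ≤ m0) (hFs : Antitone Fs) (f : Lp E 2 μ) :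
    Tendsto (fun n => (condExpL2 E 𝕜 (hle n) f : Lp E 2 μ)) atTop
      (𝓝 (condExpL2 E 𝕜 ((iInf_le Fs 0).trans (hle 0)) f)) := by
  have := fun n => Fact.mk (hle n)
  have : Fact ((⨅ n, Fs n) ≤ m0) := ⟨(iInf_le Fs 0).trans (hle 0)⟩
  exact Submodule.starProjection_tendsto_iInf (fun i j hij => lpMeas_mono (hFs hij) 2)
    (iInf_lpMeas_of_antitone hFs 2) f

theorem integral_condExp_mul_condExp_eq_inner [IsFiniteMeasure μ] (hm : m ≤ m0) {f g : α → ℝ}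
    (hf : MemLp f 2 μ) (hg : MemLp g 2 μ) :
    ∫ x, (μ[f|m]) x * (μ[g|m]) x ∂μ =
      ⟪(condExpL2 ℝ ℝ hm hf.toLp : Lp ℝ 2 μ), condExpL2 ℝ ℝ hm hg.toLp⟫_ℝ := by
  rw [L2.inner_def]
  refine integral_congr_ae ?_
  filter_upwards [hf.condExpL2_ae_eq_condExp (𝕜 := ℝ) hm, hg.condExpL2_ae_eq_condExp (𝕜 := ℝ) hm]
    with x hfx hgx
  simp [hfx, hgx, mul_comm]

theorem tendsto_integral_condExp_mul_condExp_iInf [IsFiniteMeasure μ] (hle : ∀ n, Fs n ≤ m0)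
    (hFs : Antitone Fs) {f g : α → ℝ} (hf : MemLp f 2 μ) (hg : MemLp g 2 μ) :
    Tendsto (fun n => ∫ x, (μ[f|Fs n]) x * (μ[g|Fs n]) x ∂μ) atTop
      (𝓝 (∫ x, (μ[f|⨅ n, Fs n]) x * (μ[g|⨅ n, Fs n]) x ∂μ)) := by
  rw [integral_condExp_mul_condExp_eq_inner ((iInf_le Fs 0).trans (hle 0)) hf hg]
  exact ((tendsto_condExpL2_iInf hle hFs _).inner (tendsto_condExpL2_iInf hle hFs _)).congr
    fun n => (integral_condExp_mul_condExp_eq_inner (hle n) hf hg).symm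

-- `F` comes before `mβ` so that `mβ`, the later one, is the ambient instance on `β`.
theorem condExp_comp_ae_eq_condExp_comap [IsFiniteMeasure μ] {β : Type*}
    {F mβ : MeasurableSpace β} {μ' : Measure β} {φ : α → β} (hφ : MeasurePreserving φ μ μ')
    (hF : F ≤ mβ) {g : β → ℝ} (hg : Integrable g μ') : (μ'[g|F]) ∘ φ =ᵐ[μ] μ[g ∘ φ | F.comap φ] := by
  have hcomap : F.comap φ ≤ m0 := (MeasurableSpace.comap_mono hF).trans hφ.measurable.comap_le
  have : IsFiniteMeasure μ' := hφ.map_eq ▸ inferInstance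
  refine ae_eq_condExp_of_forall_setIntegral_eq hcomap (hφ.integrable_comp_of_integrable hg)
    (fun s _ _ => ?_) ?_ ?_
  · exact (hφ.integrable_comp_of_integrable integrable_condExp).integrableOn
  · rintro _ ⟨t, ht, rfl⟩ _
    have hpull (h : β → ℝ) (hh : AEStronglyMeasurable h μ') :
        ∫ x in φ ⁻¹' t, h (φ x) ∂μ = ∫ y in t, h y ∂μ' := by
      rw [← setIntegral_map (hF t ht) (hφ.map_eq ▸ hh) hφ.aemeasurable, hφ.map_eq]
    simp only [Function.comp_apply]
    rw [hpull _ integrable_condExp.aestronglyMeasurable, hpull _ hg.aestronglyMeasurable,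
      setIntegral_condExp hF hg ht]
  · exact (stronglyMeasurable_condExp.comp_measurable
      (Measurable.of_comap_le le_rfl)).aestronglyMeasurable

theorem ProbabilityMeasure.tendsto_of_tendsto_apply_prod {α β ι : Type*}
    [TopologicalSpace α] [MeasurableSpace α] [SecondCountableTopology α] [OpensMeasurableSpace α]
    [TopologicalSpace β] [MeasurableSpace β] [SecondCountableTopology β] [OpensMeasurableSpace β]
    {l : Filter ι} [l.IsCountablyGenerated] {μs : ι → ProbabilityMeasure (α × β)}
    {μ : ProbabilityMeasure (α × β)}
    (h : ∀ A B, MeasurableSet A → MeasurableSet B →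
      Tendsto (fun i => (μs i : Measure (α × β)) (A ×ˢ B)) l
        (𝓝 ((μ : Measure (α × β)) (A ×ˢ B)))) :
    Tendsto μs l (𝓝 μ) := by
  refine isPiSystem_prod.tendsto_probabilityMeasure_of_tendsto_of_mem ?_ (fun u hu x hx => ?_) ?_
  · rintro _ ⟨A, hA, B, hB, rfl⟩
    exact hA.prod hB
  · obtain ⟨a, b, ha, hb, hxa, hxb, hab⟩ := isOpen_prod_iff.1 hu x.1 x.2 hx
    exact ⟨a ×ˢ b, ⟨a, ha.measurableSet, b, hb.measurableSet, rfl⟩,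
      prod_mem_nhds (ha.mem_nhds hxa) (hb.mem_nhds hxb), hab⟩
  · rintro _ ⟨A, hA, B, hB, rfl⟩
    exact (ENNReal.tendsto_toNNReal (measure_ne_top _ _)).comp (h A B hA hB)

end MeasureTheory

theorem Function.Injective.preimage_iterate_subset {α : Type*} {f : α → α}
    (hf : Function.Injective f) {s : Set α} (hs : s ⊆ f '' s) (n : ℕ) : f^[n] ⁻¹' s ⊆ s := by
  have hcompl : MapsTo f sᶜ sᶜ := fun x hx hfx => by
    obtain ⟨y, hy, hyx⟩ := hs hfx
    exact hx (hf hyx ▸ hy)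
  exact fun x hx => by_contra fun h => hcompl.iterate n h hx

theorem antitone_comap_iterate {α : Type*} {T : α → α} {F : MeasurableSpace α}
    (hT : F.comap T ≤ F) : Antitone fun n => F.comap T^[n] := by
  refine antitone_nat_of_succ_le fun n => ?_
  rw [Function.iterate_succ', ← MeasurableSpace.comap_comp]
  exact MeasurableSpace.comap_mono hT

section CondSquare

variable {X : Type*} {G : MeasurableSpace X} [m0 : MeasurableSpace X] {μ : Measure X}

theorem IsCondSquare.isProbabilityMeasure [IsProbabilityMeasure μ] {ν : Measure (X × X)}
    (hG : G ≤ m0) (h : IsCondSquare G μ ν) : IsProbabilityMeasure ν := by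
  constructor
  rw [← univ_prod_univ, h univ univ .univ .univ, indicator_univ, condExp_const hG]
  simp

theorem IsCondSquare.tendsto_apply_prod_iInf [IsFiniteMeasure μ] {Fs : ℕ → MeasurableSpace X}
    (hle : ∀ n, Fs n ≤ m0) (hFs : Antitone Fs) {ν : ℕ → Measure (X × X)}
    (hν : ∀ n, IsCondSquare (Fs n) μ (ν n)) {lam : Measure (X × X)}
    (hlam : IsCondSquare (⨅ n, Fs n) μ lam) {A B : Set X} (hA : MeasurableSet A)
    (hB : MeasurableSet B) : Tendsto (fun n => ν n (A ×ˢ B)) atTop (𝓝 (lam (A ×ˢ B))) := by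
  simp only [hν _ A B hA hB, hlam A B hA hB]
  exact (ENNReal.continuous_ofReal.tendsto _).comp <| tendsto_integral_condExp_mul_condExp_iInf
    hle hFs (memLp_indicator_const 2 hA 1 (.inr (measure_ne_top μ A)))
    (memLp_indicator_const 2 hB 1 (.inr (measure_ne_top μ B)))

theorem IsCondSquare.map_prodMap [IsProbabilityMeasure μ] {Y : Type*} {F mY : MeasurableSpace Y}
    {μ' : Measure Y} {φ : X → Y} (hφ : MeasurePreserving φ μ μ') (hF : F ≤ mY)
    {ν : Measure (X × X)} {ν' : Measure (Y × Y)} (hν : IsCondSquare (F.comap φ) μ ν)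
    (hν' : IsCondSquare F μ' ν') : ν.map (Prod.map φ φ) = ν' := by
  have hcomap : F.comap φ ≤ m0 := (MeasurableSpace.comap_mono hF).trans hφ.measurable.comap_le
  have := hν.isProbabilityMeasure hcomap
  refine Measure.ext_prod fun {A B} hA hB => ?_
  rw [Measure.map_apply (hφ.measurable.prodMap hφ.measurable) (hA.prod hB),
    preimage_prod_map_prod, hν _ _ (hφ.measurable hA) (hφ.measurable hB), hν' A B hA hB]
  have : IsFiniteMeasure μ' := hφ.map_eq ▸ inferInstance
  have hcomp (C : Set Y) (hC : MeasurableSet C) :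
      μ[(φ ⁻¹' C).indicator fun _ => (1 : ℝ) | F.comap φ] =ᵐ[μ]
        (μ'[C.indicator fun _ => 1 | F]) ∘ φ :=
    (condExp_comp_ae_eq_condExp_comap hφ hF ((integrable_const (1 : ℝ)).indicator hC)).symm
  set h : Y → ℝ := fun y =>
    (μ'[A.indicator fun _ => (1 : ℝ) | F]) y * (μ'[B.indicator fun _ => (1 : ℝ) | F]) y
  have hh : AEStronglyMeasurable h (μ.map φ) := hφ.map_eq ▸
    integrable_condExp.aestronglyMeasurable.mul integrable_condExp.aestronglyMeasurable
  congr 1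
  calc _ = ∫ x, h (φ x) ∂μ := by
        refine integral_congr_ae ?_
        filter_upwards [hcomp A hA, hcomp B hB] with x hAx hBx
        rw [hAx, hBx]
        rfl
    _ = ∫ y, h y ∂(μ.map φ) := (integral_map hφ.aemeasurable hh).symm
    _ = _ := by rw [hφ.map_eq]

end CondSquare

/-- (`Construction C`.) Let `μ` be a `T`-ergodic measure, `F` a
sub-σ-algebra with `T⁻¹F ⊆ F`, `F_n = T^{-n}F`, `G = ⋂_n F_n`, `ν_n = μ ⊠_{F_n} μ` and
`λ = μ ⊠_G μ`. Then: (i) `ν_n(A × B) → λ(A × B)` for all Borel `A`, `B`, and `ν_n → λ`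
weakly; (ii) `λ(F') ≥ ν_0(F')` for every closed `F' ⊆ X × X` with `(T×T)F' ⊇ F'`;
(iii) `λ(U) ≤ ν_0(U)` for every open `U ⊆ X × X` with `(T×T)U ⊆ U`. -/
theorem condSquare_construction_C
    {X : Type*} (F : MeasurableSpace X) [MetricSpace X] [CompactSpace X]
    [m0 : MeasurableSpace X] [BorelSpace X]
    (μ : Measure X) [IsProbabilityMeasure μ] (T : X ≃ₜ X) (herg : Ergodic (⇑T) μ)
    (hF : F ≤ m0) (hFdec : MeasurableSpace.comap (⇑T) F ≤ F)
    (ν : ℕ → Measure (X × X))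
    (hν : ∀ n : ℕ, IsCondSquare (MeasurableSpace.comap ((⇑T)^[n]) F) μ (ν n))
    (lam : Measure (X × X))
    (hlam : IsCondSquare (⨅ n : ℕ, MeasurableSpace.comap ((⇑T)^[n]) F) μ lam) :
    (∀ A B : Set X, MeasurableSet A → MeasurableSet B →
      Tendsto (fun n : ℕ => ν n (A ×ˢ B)) atTop (𝓝 (lam (A ×ˢ B)))) ∧
    (∀ f : X × X → ℝ, Continuous f →
      Tendsto (fun n : ℕ => ∫ p, f p ∂(ν n)) atTop (𝓝 (∫ p, f p ∂lam))) ∧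
    (∀ F' : Set (X × X), IsClosed F' → F' ⊆ Prod.map (⇑T) (⇑T) '' F' → ν 0 F' ≤ lam F') ∧
    (∀ U : Set (X × X), IsOpen U → Prod.map (⇑T) (⇑T) '' U ⊆ U → lam U ≤ ν 0 U) := by
  have hle (n : ℕ) : F.comap (⇑T)^[n] ≤ m0 :=
    (MeasurableSpace.comap_mono hF).trans (T.continuous.measurable.iterate n).comap_le
  have := fun n => (hν n).isProbabilityMeasure (hle n)
  have := hlam.isProbabilityMeasure ((iInf_le _ 0).trans (hle 0))
  have hrect (A B : Set X) (hA : MeasurableSet A) (hB : MeasurableSet B) :=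
    IsCondSquare.tendsto_apply_prod_iInf hle (antitone_comap_iterate hFdec) hν hlam hA hB
  have hweak : Tendsto (β := ProbabilityMeasure (X × X)) (fun n => ⟨ν n, inferInstance⟩) atTop
      (𝓝 ⟨lam, inferInstance⟩) := ProbabilityMeasure.tendsto_of_tendsto_apply_prod hrect
  have hshift (n : ℕ) {S : Set (X × X)} (hS : MeasurableSet S) :
      ν 0 S = ν n ((Prod.map T T)^[n] ⁻¹' S) := by
    have hν0 : IsCondSquare F μ (ν 0) := by simpa using hν 0
    rw [← (hν n).map_prodMap (herg.toMeasurePreserving.iterate n) hF hν0, Prod.map_iterate,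
      Measure.map_apply (by fun_prop) hS]
  refine ⟨hrect, fun f hf => ?_, fun F' hF' hsub => ?_, fun U hU hsub => ?_⟩
  · simpa using ProbabilityMeasure.tendsto_iff_forall_integral_tendsto.1 hweak
      (BoundedContinuousFunction.mkOfCompact ⟨f, hf⟩)
  · refine le_trans (le_limsup_of_frequently_le' (.of_forall fun n => ?_))
      (ProbabilityMeasure.limsup_measure_closed_le_of_tendsto hweak hF')
    rw [hshift n hF'.measurableSet]
    exact measure_mono ((T.injective.prodMap T.injective).preimage_iterate_subset hsub n)
  · refine (ProbabilityMeasure.le_liminf_measure_open_of_tendsto hweak hU).trans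
      (liminf_le_of_frequently_le' (.of_forall fun n => ?_))
    rw [hshift n hU.measurableSet]
    exact measure_mono ((mapsTo_iff_image_subset.2 hsub).iterate n)
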